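/- arXiv:2305.07971 — 3 statements merged into one kernel-verified Lean document; each statement's English description precedes it below -/
import Mathlib

section
/- Rademacher contraction: Let σ_1,...,σ_n be i.i.d. Rademacher variables (±1 with probability 1/2), let Z_1,...,Z_n be fixed points in a set Z, let H be a set of functions h : Z → ℝ, and let φ : ℝ → ℝ be L-Lipschitz. Then E_σ [ sup_{h∈H} (1/n) Σ_i σ_i φ(h(Z_i)) ] ≤ L · E_σ [ sup_{h∈H} (1/n) Σ_i σ_i h(Z_i) ]. -/
/-! The Ledoux–Talagrand argument: replace `φ` by `t ↦ L * t` one coordinate at a time.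
Splitting the sign vector at a coordinate `k`, the two values of `σ k` contribute
`sup (A + φ ∘ u) + sup (A - φ ∘ u)`; for a pair of points `h, h'` ordered by `u`, the Lipschitz
bound moves `φ (u h) - φ (u h')` into `L * (u h - u h')`, so this is at most
`sup (A + L u) + sup (A - L u)`. The normalisation `1 / n` is absorbed into `φ`. -/

open Finset

/-- The real sign `±1` associated with a Boolean. -/
def radSign (b : Bool) : ℝ := if b then 1 else -1

open Set

@[simp] lemma radSign_true : radSign true = 1 := rfl
@[simp] lemma radSign_false : radSign false = -1 := rfl

theorem iSup_add_iSup_sub_le_of_lipschitz {J : Type*} [Nonempty J] {A u : J → ℝ} {ψ : ℝ → ℝ}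
    {K : ℝ} (hψ : ∀ a b, |ψ a - ψ b| ≤ K * |a - b|)
    (hadd : BddAbove (range fun j => A j + K * u j))
    (hsub : BddAbove (range fun j => A j - K * u j)) :
    (⨆ j, A j + ψ (u j)) + (⨆ j, A j - ψ (u j))
      ≤ (⨆ j, A j + K * u j) + ⨆ j, A j - K * u j := by
  set S := (⨆ j, A j + K * u j) + ⨆ j, A j - K * u j
  have hpair : ∀ i j, (A i + ψ (u i)) + (A j - ψ (u j)) ≤ S := by
    intro i j
    have hψij := (le_abs_self _).trans (hψ (u i) (u j))
    rcases le_total (u j) (u i) with hji | hij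
    · rw [abs_of_nonneg (sub_nonneg.2 hji)] at hψij
      linarith [le_ciSup hadd i, le_ciSup hsub j]
    · rw [abs_of_nonpos (sub_nonpos.2 hij)] at hψij
      linarith [le_ciSup hadd j, le_ciSup hsub i]
  have hleft : ∀ i, A i + ψ (u i) ≤ S - ⨆ j, A j - ψ (u j) := fun i => by
    linarith [ciSup_le fun j => show A j - ψ (u j) ≤ S - (A i + ψ (u i)) by linarith [hpair i j]]
  linarith [ciSup_le hleft]

section

variable {ι J : Type*} [Fintype ι] [DecidableEq ι]

theorem sum_radSign_funSplitAt_symm (k : ι) (b : Bool) (τ : {i // i ≠ k} → Bool) (y : ι → ℝ) :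
    ∑ i, radSign ((Equiv.funSplitAt k Bool).symm (b, τ) i) * y i
      = radSign b * y k + ∑ i : {i // i ≠ k}, radSign (τ i) * y i := by
  rw [Fintype.sum_eq_add_sum_subtype_ne _ k]
  simp only [Equiv.funSplitAt, Equiv.piSplitAt_symm_apply, dif_pos]
  congr 1
  exact sum_congr rfl fun i _ => by rw [dif_neg i.2]

theorem sum_iSup_sum_radSign_le_of_lipschitz_coord [Nonempty J] (x : J → ι → ℝ) {f g : ι → ℝ → ℝ}
    {k : ι} {K : ℝ} (hfg : ∀ i ≠ k, f i = g i) (hgk : ∀ t, g k t = K * t)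
    (hfk : ∀ a b, |f k a - f k b| ≤ K * |a - b|)
    (hg : ∀ σ : ι → Bool, BddAbove (range fun j => ∑ i, radSign (σ i) * g i (x j i))) :
    ∑ σ : ι → Bool, ⨆ j, ∑ i, radSign (σ i) * f i (x j i)
      ≤ ∑ σ : ι → Bool, ⨆ j, ∑ i, radSign (σ i) * g i (x j i) := by
  let e := (Equiv.funSplitAt k Bool).symm
  simp only [← e.sum_comp, Fintype.sum_prod_type_right, Fintype.sum_bool]
  refine sum_le_sum fun τ _ => ?_
  set A : J → ℝ := fun j => ∑ i : {i // i ≠ k}, radSign (τ i) * g i (x j i)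
  have hsplit : ∀ F : ι → ℝ → ℝ, (∀ i ≠ k, F i = g i) → ∀ b j,
      ∑ i, radSign (e (b, τ) i) * F i (x j i) = A j + radSign b * F k (x j k) := fun F hF b j => by
    rw [sum_radSign_funSplitAt_symm, add_comm]
    exact congrArg (· + _) (sum_congr rfl fun i _ => by rw [hF i i.2])
  have hadd := hg (e (true, τ))
  have hsub := hg (e (false, τ))
  simp only [hsplit f hfg, hsplit g fun _ _ => rfl, hgk, radSign_true, radSign_false, one_mul,
    neg_one_mul, ← sub_eq_add_neg] at hadd hsub ⊢
  exact iSup_add_iSup_sub_le_of_lipschitz hfk hadd hsub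

theorem sum_radSign_mul_ite_eq (σ : ι → Bool) (s : Finset ι) (a b : ι → ℝ) :
    ∑ i, radSign (σ i) * (if i ∈ s then a i else b i)
      = (∑ i, radSign (s.piecewise σ (fun _ => true) i) * a i
        + ∑ i, radSign (s.piecewise σ (fun _ => false) i) * a i
        + ∑ i, radSign (s.piecewise (fun _ => true) σ i) * b i
        + ∑ i, radSign (s.piecewise (fun _ => false) σ i) * b i) / 2 := by
  rw [eq_div_iff two_ne_zero, ← sum_add_distrib, ← sum_add_distrib, ← sum_add_distrib, sum_mul]
  refine sum_congr rfl fun i _ => ?_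
  by_cases hi : i ∈ s
  · simp only [hi, ↓reduceIte, Finset.piecewise_eq_of_mem, radSign_true, radSign_false]
    ring
  · simp only [hi, ↓reduceIte, not_false_eq_true, Finset.piecewise_eq_of_notMem, radSign_true,
      radSign_false]
    ring

theorem bddAbove_range_sum_radSign_mul_ite {a b : J → ι → ℝ}
    (ha : ∀ σ : ι → Bool, BddAbove (range fun j => ∑ i, radSign (σ i) * a j i))
    (hb : ∀ σ : ι → Bool, BddAbove (range fun j => ∑ i, radSign (σ i) * b j i))
    (s : Finset ι) (σ : ι → Bool) :
    BddAbove (range fun j => ∑ i, radSign (σ i) * if i ∈ s then a j i else b j i) := by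
  obtain ⟨M₁, hM₁⟩ := ha (s.piecewise σ fun _ => true)
  obtain ⟨M₂, hM₂⟩ := ha (s.piecewise σ fun _ => false)
  obtain ⟨M₃, hM₃⟩ := hb (s.piecewise (fun _ => true) σ)
  obtain ⟨M₄, hM₄⟩ := hb (s.piecewise (fun _ => false) σ)
  refine ⟨(M₁ + M₂ + M₃ + M₄) / 2, forall_mem_range.2 fun j => ?_⟩
  rw [sum_radSign_mul_ite_eq]
  linarith [hM₁ (mem_range_self j), hM₂ (mem_range_self j), hM₃ (mem_range_self j),
    hM₄ (mem_range_self j)]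

theorem sum_iSup_sum_radSign_comp_le (x : J → ι → ℝ) {ψ : ℝ → ℝ} {K : ℝ}
    (hψ : ∀ a b, |ψ a - ψ b| ≤ K * |a - b|)
    (hψx : ∀ σ : ι → Bool, BddAbove (range fun j => ∑ i, radSign (σ i) * ψ (x j i)))
    (hKx : ∀ σ : ι → Bool, BddAbove (range fun j => ∑ i, radSign (σ i) * (K * x j i))) :
    ∑ σ : ι → Bool, ⨆ j, ∑ i, radSign (σ i) * ψ (x j i)
      ≤ ∑ σ : ι → Bool, ⨆ j, ∑ i, radSign (σ i) * (K * x j i) := by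
  rcases isEmpty_or_nonempty J with hJ | hJ
  · simp
  let mixed (s : Finset ι) (i : ι) (t : ℝ) : ℝ := if i ∈ s then K * t else ψ t
  have hmixed : ∀ s : Finset ι, ∑ σ : ι → Bool, ⨆ j, ∑ i, radSign (σ i) * ψ (x j i)
      ≤ ∑ σ : ι → Bool, ⨆ j, ∑ i, radSign (σ i) * mixed s i (x j i) := by
    intro s
    induction s using Finset.induction_on with
    | empty => simp [mixed]
    | insert k s hk ih =>
      refine ih.trans (sum_iSup_sum_radSign_le_of_lipschitz_coord x (k := k) (K := K) ?_ ?_ ?_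
        (bddAbove_range_sum_radSign_mul_ite hKx hψx _))
      · intro i hi
        simp [mixed, hi]
      · simp [mixed]
      · simpa [mixed, hk] using hψ
  simpa [mixed] using hmixed univ

end

theorem stmt10_general {Z : Type*} (n : ℕ) (Zp : Fin n → Z) (H : Set (Z → ℝ))
    (φ : ℝ → ℝ) (L : ℝ) (hφ : ∀ a b : ℝ, |φ a - φ b| ≤ L * |a - b|)
    (hb1 : ∀ σ : Fin n → Bool, BddAbove (Set.range fun h : H =>
        (1 / n : ℝ) * ∑ i, radSign (σ i) * φ ((h : Z → ℝ) (Zp i))))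
    (hb2 : ∀ σ : Fin n → Bool, BddAbove (Set.range fun h : H =>
        (1 / n : ℝ) * ∑ i, radSign (σ i) * (h : Z → ℝ) (Zp i))) :
    (1 / 2 ^ n : ℝ) * ∑ σ : Fin n → Bool,
        ⨆ h : H, (1 / n : ℝ) * ∑ i, radSign (σ i) * φ ((h : Z → ℝ) (Zp i))
      ≤ L * ((1 / 2 ^ n : ℝ) * ∑ σ : Fin n → Bool,
        ⨆ h : H, (1 / n : ℝ) * ∑ i, radSign (σ i) * (h : Z → ℝ) (Zp i)) := by
  have hL : 0 ≤ L := nonneg_of_mul_nonneg_left ((abs_nonneg _).trans (hφ 1 0)) (by norm_num)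
  set c : ℝ := 1 / n
  have hc : 0 ≤ c := by positivity
  have hinner : ∀ (σ : Fin n → Bool) (y : Fin n → ℝ),
      c * ∑ i, radSign (σ i) * y i = ∑ i, radSign (σ i) * (c * y i) := fun σ y => by
    rw [mul_sum]; exact sum_congr rfl fun i _ => mul_left_comm _ _ _
  have hscale : ∀ (σ : Fin n → Bool) (y : Fin n → ℝ),
      ∑ i, radSign (σ i) * (c * L * y i) = L * (c * ∑ i, radSign (σ i) * y i) := fun σ y => by
    rw [hinner, mul_sum]; exact sum_congr rfl fun i _ => by ring
  have hcφ : ∀ a b, |c * φ a - c * φ b| ≤ c * L * |a - b| := fun a b => by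
    rw [← mul_sub, abs_mul, abs_of_nonneg hc, mul_assoc]
    exact mul_le_mul_of_nonneg_left (hφ a b) hc
  have key := sum_iSup_sum_radSign_comp_le (fun (h : H) i => (h : Z → ℝ) (Zp i)) hcφ
    (fun σ => by simpa only [hinner] using hb1 σ)
    (fun σ => by
      simpa only [hscale, ← range_comp, Function.comp_def] using
        (monotone_mul_left_of_nonneg hL).map_bddAbove (hb2 σ))
  calc _ = (1 / 2 ^ n : ℝ) * ∑ σ : Fin n → Bool,
        ⨆ h : H, ∑ i, radSign (σ i) * (c * φ ((h : Z → ℝ) (Zp i))) := by simp only [hinner]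
    _ ≤ (1 / 2 ^ n : ℝ) * ∑ σ : Fin n → Bool,
        ⨆ h : H, ∑ i, radSign (σ i) * (c * L * (h : Z → ℝ) (Zp i)) := by gcongr
    _ = _ := by
      simp only [hscale, ← Real.mul_iSup_of_nonneg hL, ← mul_sum]
      ring

/-- Rademacher contraction: composing a function class with an `L`-Lipschitz `φ`
multiplies the empirical Rademacher complexity by at most `L`. -/
theorem stmt10 {Z : Type*} (n : ℕ) (Zp : Fin n → Z) (H : Set (Z → ℝ)) (hne : H.Nonempty)
    (φ : ℝ → ℝ) (L : ℝ) (hL : 0 ≤ L) (hφ : ∀ a b : ℝ, |φ a - φ b| ≤ L * |a - b|)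
    (hb1 : ∀ σ : Fin n → Bool, BddAbove (Set.range fun h : H =>
        (1 / n : ℝ) * ∑ i, radSign (σ i) * φ ((h : Z → ℝ) (Zp i))))
    (hb2 : ∀ σ : Fin n → Bool, BddAbove (Set.range fun h : H =>
        (1 / n : ℝ) * ∑ i, radSign (σ i) * (h : Z → ℝ) (Zp i))) :
    (1 / 2 ^ n : ℝ) * ∑ σ : Fin n → Bool,
        ⨆ h : H, (1 / n : ℝ) * ∑ i, radSign (σ i) * φ ((h : Z → ℝ) (Zp i))
      ≤ L * ((1 / 2 ^ n : ℝ) * ∑ σ : Fin n → Bool,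
        ⨆ h : H, (1 / n : ℝ) * ∑ i, radSign (σ i) * (h : Z → ℝ) (Zp i)) :=
  stmt10_general n Zp H φ L hφ hb1 hb2
end

section
/- Kernel eigenvalue local Rademacher bound, finite-dimensional one-hot case: Let μ be a probability measure on a finite set F of size N, let (e_f)_{f∈F} be the standard basis of ℝ^F, and for r ≥ 0 let H_r = { z ↦ ⟨w, e_z⟩ : ‖w‖₂ ≤ 1, Σ_{f∈F} μ({f}) w_f² ≤ r }. Then for i.i.d. samples Z_1,...,Z_n from μ, the Rademacher complexity E[ sup_{h∈H_r} (1/n) Σ_i σ_i h(Z_i) ] ≤ √( (2/n) Σ_{f∈F} min(r, μ({f})) ). -/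
open Finset

lemma sum_fn_prod {ι κ : Type*} [Fintype ι] [DecidableEq ι] [Fintype κ]
    (g : ι → κ → ℝ) : (∑ x : ι → κ, ∏ i, g i (x i)) = ∏ i, ∑ j, g i j := by
  rw [← Fintype.piFinset_univ]
  exact Finset.sum_prod_piFinset _ _

lemma sign_orth (n : ℕ) (i j : Fin n) :
    ∑ σ : Fin n → Bool, radSign (σ i) * radSign (σ j)
      = if i = j then (2 ^ n : ℝ) else 0 := by
  rcases eq_or_ne i j with h | h
  · subst h
    have : ∀ b, radSign b * radSign b = 1 := by intro b; cases b <;> simp [radSign]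
    simp only [this, Finset.sum_const, Finset.card_univ]
    simp
  · simp only [if_neg h]
    set g : Fin n → Bool → ℝ := fun k b => if k = i then radSign b else if k = j then radSign b else 1 with hg
    have h1 : ∀ σ : Fin n → Bool, radSign (σ i) * radSign (σ j) = ∏ k, g k (σ k) := by
      intro σ
      rw [← Finset.mul_prod_erase univ (fun k => g k (σ k)) (Finset.mem_univ i),
          ← Finset.mul_prod_erase (univ.erase i) _
            (by simp [h.symm] : j ∈ univ.erase i)]
      have h2 : ∏ k ∈ (univ.erase i).erase j, g k (σ k) = 1 := by
        apply Finset.prod_eq_one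
        intro k hk
        simp only [Finset.mem_erase, Finset.mem_univ, and_true] at hk
        simp [hg, hk.1, hk.2]
      rw [h2]
      simp [hg, h.symm]
    rw [Finset.sum_congr rfl fun σ _ => h1 σ, sum_fn_prod]
    apply Finset.prod_eq_zero (Finset.mem_univ i)
    simp [hg, radSign]

lemma sign_sq_sum (n : ℕ) (A : Fin n → ℝ) :
    ∑ σ : Fin n → Bool, (∑ i, radSign (σ i) * A i) ^ 2 = 2 ^ n * ∑ i, (A i) ^ 2 := by
  calc ∑ σ : Fin n → Bool, (∑ i, radSign (σ i) * A i) ^ 2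
      = ∑ σ : Fin n → Bool, ∑ i, ∑ j, (radSign (σ i) * radSign (σ j)) * (A i * A j) := by
        refine Finset.sum_congr rfl fun σ _ => ?_
        rw [sq, Finset.sum_mul_sum]
        exact Finset.sum_congr rfl fun i _ => Finset.sum_congr rfl fun j _ => by ring
    _ = ∑ i, ∑ j, (∑ σ : Fin n → Bool, radSign (σ i) * radSign (σ j)) * (A i * A j) := by
        rw [Finset.sum_comm]
        refine Finset.sum_congr rfl fun i _ => ?_
        rw [Finset.sum_comm]
        exact Finset.sum_congr rfl fun j _ => by rw [← Finset.sum_mul]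
    _ = ∑ i, ∑ j, (if i = j then (2 ^ n : ℝ) else 0) * (A i * A j) := by
        simp_rw [sign_orth]
    _ = ∑ i, 2 ^ n * (A i * A i) := by
        refine Finset.sum_congr rfl fun i _ => ?_
        simp_rw [ite_mul, zero_mul]
        rw [Finset.sum_ite_eq]
        simp
    _ = 2 ^ n * ∑ i, (A i) ^ 2 := by
        rw [Finset.mul_sum]
        exact Finset.sum_congr rfl fun i _ => by ring

lemma marginal {F : Type*} [Fintype F] [DecidableEq F] (μ : F → ℝ) (hμ1 : ∑ f, μ f = 1)
    (n : ℕ) (i : Fin n) (f0 : F) :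
    ∑ Zs : Fin n → F, (∏ k, μ (Zs k)) * (if Zs i = f0 then (1 : ℝ) else 0) = μ f0 := by
  set h : Fin n → F → ℝ := fun k z => if k = i then (if z = f0 then μ z else 0) else μ z with hh
  have h1 : ∀ Zs : Fin n → F,
      (∏ k, μ (Zs k)) * (if Zs i = f0 then (1 : ℝ) else 0) = ∏ k, h k (Zs k) := by
    intro Zs
    rw [← Finset.mul_prod_erase univ (fun k => h k (Zs k)) (Finset.mem_univ i),
        ← Finset.mul_prod_erase univ (fun k => μ (Zs k)) (Finset.mem_univ i)]
    have h2 : ∏ k ∈ univ.erase i, h k (Zs k) = ∏ k ∈ univ.erase i, μ (Zs k) :=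
      Finset.prod_congr rfl fun k hk => by
        simp [hh, (Finset.mem_erase.mp hk).1]
    rw [h2]
    simp only [hh, if_pos rfl]
    split_ifs <;> ring
  rw [Finset.sum_congr rfl fun Zs _ => h1 Zs, sum_fn_prod]
  have h3 : ∀ k : Fin n, (∑ z, h k z) = if k = i then μ f0 else 1 := by
    intro k
    rcases eq_or_ne k i with hk | hk
    · subst hk
      simp only [hh, if_pos rfl]
      rw [Finset.sum_ite_eq' univ f0 μ]
      simp
    · simp [hh, hk, hμ1]
  rw [Finset.prod_congr rfl fun k _ => h3 k]
  rw [Finset.prod_eq_single i (fun k _ hk => by simp [hk]) (by simp)]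
  simp

noncomputable def Vval (n : ℕ) {F : Type*} [Fintype F] [DecidableEq F]
    (Zs : Fin n → F) (σ : Fin n → Bool) (f : F) : ℝ :=
  (1 / n : ℝ) * ∑ i, radSign (σ i) * (if Zs i = f then 1 else 0)

noncomputable def Sval (n : ℕ) {F : Type*} [Fintype F] [DecidableEq F]
    (μ : F → ℝ) (r : ℝ) (Zs : Fin n → F) (σ : Fin n → Bool) : ℝ :=
  ∑ f, (Vval n Zs σ f) ^ 2 / (μ f + r)

lemma Sval_nonneg (n : ℕ) {F : Type*} [Fintype F] [DecidableEq F]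
    (μ : F → ℝ) (r : ℝ) (hd : ∀ f, 0 < μ f + r) (Zs : Fin n → F) (σ : Fin n → Bool) :
    0 ≤ Sval n μ r Zs σ :=
  Finset.sum_nonneg fun f _ => div_nonneg (sq_nonneg _) (hd f).le

lemma pointwise_bound {F : Type*} [Fintype F] [DecidableEq F] (n : ℕ)
    (μ : F → ℝ) (hμ0 : ∀ f, 0 ≤ μ f) (r : ℝ) (hrpos : 0 < r)
    (Zs : Fin n → F) (σ : Fin n → Bool) :
    (⨆ w : {w : F → ℝ // (∑ f, (w f) ^ 2) ≤ 1 ∧ (∑ f, μ f * (w f) ^ 2) ≤ r},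
        (1 / n : ℝ) * ∑ i, radSign (σ i) * (w : F → ℝ) (Zs i))
      ≤ Real.sqrt (2 * r * Sval n μ r Zs σ) := by
  have hden : ∀ f, 0 < μ f + r := fun f => add_pos_of_nonneg_of_pos (hμ0 f) hrpos
  haveI : Nonempty {w : F → ℝ // (∑ f, (w f) ^ 2) ≤ 1 ∧ (∑ f, μ f * (w f) ^ 2) ≤ r} :=
    ⟨⟨0, by simp, by simp [hrpos.le]⟩⟩
  apply ciSup_le
  rintro ⟨w, hw1, hw2⟩
  show (1 / n : ℝ) * ∑ i, radSign (σ i) * w (Zs i) ≤ _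
  have hwv : (1 / n : ℝ) * ∑ i, radSign (σ i) * w (Zs i) = ∑ f, w f * Vval n Zs σ f := by
    have hsel : ∀ i, (∑ f, if Zs i = f then w f else 0) = w (Zs i) := fun i => by
      rw [Finset.sum_ite_eq]; simp
    calc (1 / n : ℝ) * ∑ i, radSign (σ i) * w (Zs i)
        = ∑ i, (1 / n : ℝ) * (radSign (σ i) * w (Zs i)) := by rw [Finset.mul_sum]
      _ = ∑ i, ∑ f, (1 / n : ℝ) * (radSign (σ i) * (if Zs i = f then w f else 0)) := by
          refine Finset.sum_congr rfl fun i _ => ?_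
          rw [← Finset.mul_sum, ← Finset.mul_sum, hsel i]
      _ = ∑ f, ∑ i, (1 / n : ℝ) * (radSign (σ i) * (if Zs i = f then w f else 0)) :=
          Finset.sum_comm
      _ = ∑ f, w f * Vval n Zs σ f := by
          refine Finset.sum_congr rfl fun f _ => ?_
          unfold Vval
          rw [Finset.mul_sum, Finset.mul_sum]
          refine Finset.sum_congr rfl fun i _ => ?_
          split_ifs <;> ring
  rw [hwv]
  apply Real.le_sqrt_of_sq_le
  have hcs := Finset.sum_mul_sq_le_sq_mul_sq univ
    (fun f => Real.sqrt (μ f + r) * w f) (fun f => Vval n Zs σ f / Real.sqrt (μ f + r))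
  have he : ∀ f ∈ univ,
      (Real.sqrt (μ f + r) * w f) * (Vval n Zs σ f / Real.sqrt (μ f + r))
        = w f * Vval n Zs σ f := fun f _ => by
    have hs : Real.sqrt (μ f + r) ≠ 0 := Real.sqrt_ne_zero'.mpr (hden f)
    field_simp
  rw [Finset.sum_congr rfl he] at hcs
  have ha : ∑ f, (Real.sqrt (μ f + r) * w f) ^ 2 ≤ 2 * r := by
    have h1 : ∀ f ∈ univ, (Real.sqrt (μ f + r) * w f) ^ 2 = μ f * w f ^ 2 + r * w f ^ 2 :=
      fun f _ => by rw [mul_pow, Real.sq_sqrt (hden f).le]; ring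
    rw [Finset.sum_congr rfl h1, Finset.sum_add_distrib, ← Finset.mul_sum]
    have h2 : r * ∑ f, w f ^ 2 ≤ r * 1 := mul_le_mul_of_nonneg_left hw1 hrpos.le
    linarith
  have hb : ∑ f, (Vval n Zs σ f / Real.sqrt (μ f + r)) ^ 2 = Sval n μ r Zs σ := by
    unfold Sval
    exact Finset.sum_congr rfl fun f _ => by rw [div_pow, Real.sq_sqrt (hden f).le]
  rw [hb] at hcs
  calc (∑ f, w f * Vval n Zs σ f) ^ 2
      ≤ (∑ f, (Real.sqrt (μ f + r) * w f) ^ 2) * Sval n μ r Zs σ := hcs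
    _ ≤ 2 * r * Sval n μ r Zs σ :=
        mul_le_mul_of_nonneg_right ha (Sval_nonneg n μ r hden Zs σ)

lemma exp_vsq {F : Type*} [Fintype F] [DecidableEq F] (n : ℕ) (hn : 0 < n)
    (μ : F → ℝ) (hμ1 : ∑ f, μ f = 1) (f0 : F) :
    ∑ Zs : Fin n → F, ∑ σ : Fin n → Bool,
      ((∏ k, μ (Zs k)) * (1 / 2 ^ n : ℝ)) * (Vval n Zs σ f0) ^ 2 = μ f0 / n := by
  have hn' : (n : ℝ) ≠ 0 := Nat.cast_ne_zero.mpr hn.ne'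
  have h2n : (2 : ℝ) ^ n ≠ 0 := by positivity
  calc ∑ Zs : Fin n → F, ∑ σ : Fin n → Bool,
        ((∏ k, μ (Zs k)) * (1 / 2 ^ n : ℝ)) * (Vval n Zs σ f0) ^ 2
      = ∑ Zs : Fin n → F, (1 / (n : ℝ) ^ 2) * ((∏ k, μ (Zs k)) * ((1 / 2 ^ n : ℝ) *
          ∑ σ : Fin n → Bool,
            (∑ i, radSign (σ i) * (if Zs i = f0 then (1 : ℝ) else 0)) ^ 2)) := by
        refine Finset.sum_congr rfl fun Zs _ => ?_
        have h1 : ∀ σ : Fin n → Bool,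
            ((∏ k, μ (Zs k)) * (1 / 2 ^ n : ℝ)) * (Vval n Zs σ f0) ^ 2
              = (1 / (n : ℝ) ^ 2) * ((∏ k, μ (Zs k)) * ((1 / 2 ^ n : ℝ) *
                  (∑ i, radSign (σ i) * (if Zs i = f0 then (1 : ℝ) else 0)) ^ 2)) :=
          fun σ => by unfold Vval; ring
        rw [Finset.sum_congr rfl fun σ _ => h1 σ, ← Finset.mul_sum, ← Finset.mul_sum,
          ← Finset.mul_sum]
    _ = ∑ Zs : Fin n → F, (1 / (n : ℝ) ^ 2) * ((∏ k, μ (Zs k)) *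
          ∑ i, (if Zs i = f0 then (1 : ℝ) else 0)) := by
        refine Finset.sum_congr rfl fun Zs _ => ?_
        rw [sign_sq_sum]
        have h1 : ∀ i ∈ (univ : Finset (Fin n)),
            ((if Zs i = f0 then (1 : ℝ) else 0)) ^ 2 = (if Zs i = f0 then (1 : ℝ) else 0) :=
          fun i _ => by split_ifs <;> norm_num
        rw [Finset.sum_congr rfl h1]
        field_simp
    _ = (1 / (n : ℝ) ^ 2) * ∑ i : Fin n, ∑ Zs : Fin n → F,
          (∏ k, μ (Zs k)) * (if Zs i = f0 then (1 : ℝ) else 0) := by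
        rw [← Finset.mul_sum]
        congr 1
        rw [← Finset.sum_comm]
        exact Finset.sum_congr rfl fun Zs _ => Finset.mul_sum _ _ _
    _ = (1 / (n : ℝ) ^ 2) * ∑ _i : Fin n, μ f0 := by
        congr 1
        exact Finset.sum_congr rfl fun i _ => marginal μ hμ1 n i f0
    _ = μ f0 / n := by
        rw [Finset.sum_const, Finset.card_univ, Fintype.card_fin, nsmul_eq_mul]
        field_simp

/-- Kernel eigenvalue local Rademacher bound (finite one-hot case): for i.i.d. samples from `μ`
on a finite set `F`, the Rademacher complexity of the localized class
`H_r = {z ↦ ⟨w, e_z⟩ : ‖w‖₂ ≤ 1, Σ_f μ(f) w_f² ≤ r}` is at most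
`√((2/n) Σ_f min(r, μ(f)))`. -/
theorem stmt13 {F : Type*} [Fintype F] (n : ℕ) (hn : 0 < n)
    (μ : F → ℝ) (hμ0 : ∀ f, 0 ≤ μ f) (hμ1 : ∑ f, μ f = 1) (r : ℝ) (hr : 0 ≤ r) :
    ∑ Zs : Fin n → F, (∏ i, μ (Zs i)) *
      ((1 / 2 ^ n : ℝ) * ∑ σ : Fin n → Bool,
        ⨆ w : {w : F → ℝ // (∑ f, (w f) ^ 2) ≤ 1 ∧ (∑ f, μ f * (w f) ^ 2) ≤ r},
          (1 / n : ℝ) * ∑ i, radSign (σ i) * (w : F → ℝ) (Zs i))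
      ≤ Real.sqrt ((2 / n) * ∑ f, min r (μ f)) := by
  classical
  rcases hr.eq_or_lt with hr0 | hrpos
  · -- degenerate case r = 0
    subst hr0
    have hterm : ∀ Zs : Fin n → F, ((∏ i, μ (Zs i)) *
        ((1 / 2 ^ n : ℝ) * ∑ σ : Fin n → Bool,
          ⨆ w : {w : F → ℝ // (∑ f, (w f) ^ 2) ≤ 1 ∧ (∑ f, μ f * (w f) ^ 2) ≤ 0},
            (1 / n : ℝ) * ∑ i, radSign (σ i) * (w : F → ℝ) (Zs i))) = 0 := by
      intro Zs
      by_cases hp : ∀ k, μ (Zs k) ≠ 0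
      · have hpos : ∀ k, 0 < μ (Zs k) := fun k => (hμ0 _).lt_of_ne (Ne.symm (hp k))
        have hsup : ∀ σ : Fin n → Bool,
            (⨆ w : {w : F → ℝ // (∑ f, (w f) ^ 2) ≤ 1 ∧ (∑ f, μ f * (w f) ^ 2) ≤ 0},
              (1 / n : ℝ) * ∑ i, radSign (σ i) * (w : F → ℝ) (Zs i)) = 0 := by
          intro σ
          haveI : Nonempty {w : F → ℝ // (∑ f, (w f) ^ 2) ≤ 1 ∧ (∑ f, μ f * (w f) ^ 2) ≤ 0} :=
            ⟨⟨0, by simp, by simp⟩⟩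
          have hzero : ∀ w : {w : F → ℝ // (∑ f, (w f) ^ 2) ≤ 1 ∧ (∑ f, μ f * (w f) ^ 2) ≤ 0},
              (1 / n : ℝ) * ∑ i, radSign (σ i) * (w : F → ℝ) (Zs i) = 0 := by
            rintro ⟨w, hw1, hw2⟩
            have hall : ∀ f ∈ (univ : Finset F), μ f * w f ^ 2 = 0 :=
              (Finset.sum_eq_zero_iff_of_nonneg
                (fun f _ => mul_nonneg (hμ0 f) (sq_nonneg _))).mp
                (le_antisymm hw2 (Finset.sum_nonneg fun f _ =>
                  mul_nonneg (hμ0 f) (sq_nonneg _)))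
            have hwz : ∀ i : Fin n, w (Zs i) = 0 := by
              intro i
              have h := hall (Zs i) (Finset.mem_univ _)
              have h2 : w (Zs i) ^ 2 = 0 := by
                rcases mul_eq_zero.mp h with h' | h'
                · exact absurd h' (hpos i).ne'
                · exact h'
              exact pow_eq_zero_iff (two_ne_zero) |>.mp h2
            show (1 / n : ℝ) * ∑ i, radSign (σ i) * w (Zs i) = 0
            simp [hwz]
          simp_rw [hzero]
          exact ciSup_const
        rw [Finset.sum_congr rfl fun σ _ => hsup σ]
        simp
      · push_neg at hp
        obtain ⟨k, hk⟩ := hp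
        rw [Finset.prod_eq_zero (Finset.mem_univ k) hk, zero_mul]
    rw [Finset.sum_congr rfl fun Zs _ => hterm Zs, Finset.sum_const_zero]
    exact Real.sqrt_nonneg _
  · -- main case 0 < r
    have hn' : (n : ℝ) ≠ 0 := Nat.cast_ne_zero.mpr hn.ne'
    have hden : ∀ f, 0 < μ f + r := fun f => add_pos_of_nonneg_of_pos (hμ0 f) hrpos
    have hp0 : ∀ Zs : Fin n → F, 0 ≤ ∏ i, μ (Zs i) :=
      fun Zs => Finset.prod_nonneg fun i _ => hμ0 _
    have hq0 : ∀ x : (Fin n → F) × (Fin n → Bool),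
        0 ≤ (∏ k, μ (x.1 k)) * (1 / 2 ^ n : ℝ) :=
      fun x => mul_nonneg (hp0 _) (by positivity)
    have key : ∀ f0 : F, ∑ x : (Fin n → F) × (Fin n → Bool),
        ((∏ k, μ (x.1 k)) * (1 / 2 ^ n : ℝ)) * (Vval n x.1 x.2 f0) ^ 2 = μ f0 / n := by
      intro f0
      rw [Fintype.sum_prod_type]
      exact exp_vsq n hn μ hμ1 f0
    have hE : ∑ x : (Fin n → F) × (Fin n → Bool),
        ((∏ k, μ (x.1 k)) * (1 / 2 ^ n : ℝ)) * (2 * r * Sval n μ r x.1 x.2)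
          = ∑ f, (2 * r / (μ f + r)) * (μ f / n) := by
      calc ∑ x : (Fin n → F) × (Fin n → Bool),
            ((∏ k, μ (x.1 k)) * (1 / 2 ^ n : ℝ)) * (2 * r * Sval n μ r x.1 x.2)
          = ∑ x : (Fin n → F) × (Fin n → Bool), ∑ f, (2 * r / (μ f + r)) *
              (((∏ k, μ (x.1 k)) * (1 / 2 ^ n : ℝ)) * (Vval n x.1 x.2 f) ^ 2) := by
            refine Finset.sum_congr rfl fun x _ => ?_
            unfold Sval
            rw [Finset.mul_sum, Finset.mul_sum]
            exact Finset.sum_congr rfl fun f _ => by ring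
        _ = ∑ f, (2 * r / (μ f + r)) * ∑ x : (Fin n → F) × (Fin n → Bool),
              ((∏ k, μ (x.1 k)) * (1 / 2 ^ n : ℝ)) * (Vval n x.1 x.2 f) ^ 2 := by
            rw [Finset.sum_comm]
            exact Finset.sum_congr rfl fun f _ => (Finset.mul_sum _ _ _).symm
        _ = ∑ f, (2 * r / (μ f + r)) * (μ f / n) :=
            Finset.sum_congr rfl fun f _ => by rw [key f]
    have hEle : (∑ f, (2 * r / (μ f + r)) * (μ f / n)) ≤ (2 / n) * ∑ f, min r (μ f) := by
      rw [Finset.mul_sum]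
      refine Finset.sum_le_sum fun f _ => ?_
      have hd := hden f
      have hnpos : (0 : ℝ) < n := by exact_mod_cast hn
      have hm : r * μ f ≤ min r (μ f) * (μ f + r) := by
        rcases le_total r (μ f) with h | h
        · rw [min_eq_left h]; nlinarith
        · rw [min_eq_right h]; nlinarith [hμ0 f]
      have e1 : (2 * r / (μ f + r)) * (μ f / n) = (2 * (r * μ f)) / ((μ f + r) * n) := by
        field_simp
      have e2 : (2 / n) * min r (μ f)
          = (2 * (min r (μ f) * (μ f + r))) / ((μ f + r) * n) := by
        field_simp
      rw [e1, e2]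
      exact (div_le_div_iff_of_pos_right (by positivity)).mpr (by nlinarith)
    have hqs : ∑ x : (Fin n → F) × (Fin n → Bool),
        (∏ k, μ (x.1 k)) * (1 / 2 ^ n : ℝ) = 1 := by
      rw [Fintype.sum_prod_type]
      have h1 : ∀ Zs : Fin n → F,
          ∑ _σ : Fin n → Bool, (∏ k, μ (Zs k)) * (1 / 2 ^ n : ℝ) = ∏ k, μ (Zs k) := by
        intro Zs
        rw [Finset.sum_const, Finset.card_univ, nsmul_eq_mul]
        have hcard : (Fintype.card (Fin n → Bool) : ℝ) = 2 ^ n := by simp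
        rw [hcard]
        field_simp
      rw [Finset.sum_congr rfl fun Zs _ => h1 Zs, sum_fn_prod (fun (_ : Fin n) (z : F) => μ z)]
      simp [hμ1]
    have hW : ∑ x : (Fin n → F) × (Fin n → Bool),
        ((∏ k, μ (x.1 k)) * (1 / 2 ^ n : ℝ)) * Real.sqrt (2 * r * Sval n μ r x.1 x.2)
          ≤ Real.sqrt ((2 / n) * ∑ f, min r (μ f)) := by
      have h1 : ∀ x ∈ (univ : Finset ((Fin n → F) × (Fin n → Bool))),
          ((∏ k, μ (x.1 k)) * (1 / 2 ^ n : ℝ)) * Real.sqrt (2 * r * Sval n μ r x.1 x.2)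
            = Real.sqrt ((∏ k, μ (x.1 k)) * (1 / 2 ^ n : ℝ)) *
              Real.sqrt (((∏ k, μ (x.1 k)) * (1 / 2 ^ n : ℝ)) *
                (2 * r * Sval n μ r x.1 x.2)) := fun x _ => by
        rw [Real.sqrt_mul (hq0 x), ← mul_assoc, Real.mul_self_sqrt (hq0 x)]
      rw [Finset.sum_congr rfl h1]
      apply Real.le_sqrt_of_sq_le
      have hcs := Finset.sum_mul_sq_le_sq_mul_sq univ
        (fun x : (Fin n → F) × (Fin n → Bool) =>
          Real.sqrt ((∏ k, μ (x.1 k)) * (1 / 2 ^ n : ℝ)))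
        (fun x : (Fin n → F) × (Fin n → Bool) =>
          Real.sqrt (((∏ k, μ (x.1 k)) * (1 / 2 ^ n : ℝ)) * (2 * r * Sval n μ r x.1 x.2)))
      have hsq1 : ∀ x ∈ (univ : Finset ((Fin n → F) × (Fin n → Bool))),
          (Real.sqrt ((∏ k, μ (x.1 k)) * (1 / 2 ^ n : ℝ))) ^ 2
            = (∏ k, μ (x.1 k)) * (1 / 2 ^ n : ℝ) := fun x _ => Real.sq_sqrt (hq0 x)
      have hsq2 : ∀ x ∈ (univ : Finset ((Fin n → F) × (Fin n → Bool))),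
          (Real.sqrt (((∏ k, μ (x.1 k)) * (1 / 2 ^ n : ℝ)) * (2 * r * Sval n μ r x.1 x.2))) ^ 2
            = ((∏ k, μ (x.1 k)) * (1 / 2 ^ n : ℝ)) * (2 * r * Sval n μ r x.1 x.2) :=
        fun x _ => Real.sq_sqrt (mul_nonneg (hq0 x)
          (mul_nonneg (by positivity) (Sval_nonneg n μ r hden x.1 x.2)))
      rw [Finset.sum_congr rfl hsq1, Finset.sum_congr rfl hsq2, hqs, one_mul, hE] at hcs
      exact le_trans hcs hEle
    have hW2 : ∑ Zs : Fin n → F, ∑ σ : Fin n → Bool,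
        ((∏ k, μ (Zs k)) * (1 / 2 ^ n : ℝ)) * Real.sqrt (2 * r * Sval n μ r Zs σ)
          ≤ Real.sqrt ((2 / n) * ∑ f, min r (μ f)) := by
      rw [Fintype.sum_prod_type] at hW
      exact hW
    refine le_trans (Finset.sum_le_sum fun Zs _ => ?_) hW2
    have step : (∏ i, μ (Zs i)) * ((1 / 2 ^ n : ℝ) * ∑ σ : Fin n → Bool,
          ⨆ w : {w : F → ℝ // (∑ f, (w f) ^ 2) ≤ 1 ∧ (∑ f, μ f * (w f) ^ 2) ≤ r},
            (1 / n : ℝ) * ∑ i, radSign (σ i) * (w : F → ℝ) (Zs i))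
        ≤ (∏ i, μ (Zs i)) * ((1 / 2 ^ n : ℝ) * ∑ σ : Fin n → Bool,
            Real.sqrt (2 * r * Sval n μ r Zs σ)) :=
      mul_le_mul_of_nonneg_left
        (mul_le_mul_of_nonneg_left
          (Finset.sum_le_sum fun σ _ => pointwise_bound n μ hμ0 r hrpos Zs σ)
          (show (0 : ℝ) ≤ 1 / 2 ^ n by positivity))
        (hp0 Zs)
    refine le_trans step ?_
    rw [Finset.mul_sum, Finset.mul_sum]
    exact le_of_eq (Finset.sum_congr rfl fun σ _ => by ring)
end

section
/- Noise exponent implies variance bound parameter ϑ: if a distribution μ on F × {±1} (F finite) has noise exponent q ∈ [0, ∞) with constant C > 0, i.e., μ_F({f : |2η(f) − 1| < t}) ≤ (C t)^q for all t > 0, then for the hinge loss clipped at 1 the variance bound holds with exponent ϑ = q/(q+1): there exists V (one may take V = 6 C^{q/(q+1)}) such that E_{f∼μ_F}[clip₁(h(f)) − clip₁(h*(f))]² ≤ V·(R(h) − R(h*))^{q/(q+1)} for all measurable h, where h* is a Bayes decision function for the clipped hinge risk. -/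
/-!
Since a clipped value `s` lies in `[-1, 1]`, the hinge loss is affine on it: the inner risk at
`x` is `1 + (1 - 2η(x)) s`. Hence a Bayes decision function takes the value `-sign (1 - 2η)` wherever
`μ_F` has mass, and the excess risk is `E = ∑ μ_F |2η - 1| |s - s*|`. For a threshold `t > 0`,
points of margin `|2η - 1| < t` carry mass at most `(C t)^q` and contribute at most `4` each to the
variance, while on the other points `(s - s*)² ≤ 2 |s - s*| ≤ (2 / t) |2η - 1| |s - s*|`.
Thus the variance is at most `4 (C t)^q + 2 E / t`, and `t = (C E)^(1/(q+1)) / C` balances both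
terms at `(C E)^(q/(q+1))`.
-/

open Finset Filter Topology

namespace HingeLoss

def clip (x : ℝ) : ℝ := max (-1) (min x 1)

lemma abs_clip_le_one (x : ℝ) : |clip x| ≤ 1 :=
  abs_le.mpr ⟨le_max_left _ _, max_le (by norm_num) (min_le_right _ _)⟩

lemma clip_of_abs_le_one {x : ℝ} (hx : |x| ≤ 1) : clip x = x := by
  obtain ⟨hx₁, hx₂⟩ := abs_le.mp hx
  rw [clip, min_eq_left hx₂, max_eq_right hx₁]

lemma inner_risk_of_abs_le_one (η : ℝ) {s : ℝ} (hs : |s| ≤ 1) :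
    η * max (1 - s) 0 + (1 - η) * max (1 + s) 0 = 1 + (1 - 2 * η) * s := by
  obtain ⟨hs₁, hs₂⟩ := abs_le.mp hs
  rw [max_eq_left (by linarith), max_eq_left (by linarith)]
  ring

lemma neg_abs_le_mul_of_abs_le_one (b : ℝ) {s : ℝ} (hs : |s| ≤ 1) : -|b| ≤ b * s := by
  have : |b * s| ≤ |b| := by
    rw [abs_mul]
    exact mul_le_of_le_one_right (abs_nonneg b) hs
  linarith [neg_abs_le (b * s)]

lemma exists_mul_clip_eq_neg_abs (b : ℝ) : ∃ x, b * clip x = -|b| := by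
  refine ⟨-SignType.sign b, ?_⟩
  rw [clip_of_abs_le_one, mul_neg, self_mul_sign]
  rcases lt_trichotomy b 0 with hb | hb | hb <;> simp [hb]

lemma mul_sub_eq_abs_mul_abs_sub {b s s' : ℝ} (hs : |s| ≤ 1) (hs' : b * s' = -|b|) :
    b * (s - s') = |b| * |s - s'| := by
  have hnonneg : 0 ≤ b * (s - s') := by
    linarith [neg_abs_le_mul_of_abs_le_one b hs, mul_sub b s s']
  rw [← abs_mul, abs_of_nonneg hnonneg]

end HingeLoss

lemma apply_le_of_forall_sum_mul_le {F α : Type*} [Fintype F] [DecidableEq F]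
    (μ : F → ℝ) (φ : F → α → ℝ) (g : F → α)
    (hmin : ∀ g' : F → α, ∑ f, μ f * φ f (g f) ≤ ∑ f, μ f * φ f (g' f))
    {f₀ : F} (hf₀ : 0 < μ f₀) (v : α) : φ f₀ (g f₀) ≤ φ f₀ v := by
  have hdiff : ∑ f, (μ f * φ f (Function.update g f₀ v f) - μ f * φ f (g f))
      = μ f₀ * (φ f₀ v - φ f₀ (g f₀)) := by
    rw [Finset.sum_eq_single f₀ (fun f _ hf => by simp [Function.update_of_ne hf])
      (by simp), Function.update_self, mul_sub]
  have hle := hmin (Function.update g f₀ v)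
  rw [← sub_nonneg, ← Finset.sum_sub_distrib, hdiff] at hle
  linarith [nonneg_of_mul_nonneg_right hle hf₀]

lemma sum_mul_sq_le_of_margin_threshold {F : Type*} [Fintype F]
    (μ a d : F → ℝ) (hμ : ∀ f, 0 ≤ μ f) (ha : ∀ f, 0 ≤ a f) (hd : ∀ f, |d f| ≤ 2)
    {t : ℝ} (ht : 0 < t) :
    ∑ f, μ f * d f ^ 2
      ≤ 4 * ∑ f ∈ univ.filter (fun f => a f < t), μ f + 2 / t * ∑ f, μ f * (a f * |d f|) := by
  have hpoint : ∀ f, μ f * d f ^ 2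
      ≤ 4 * (if a f < t then μ f else 0) + 2 / t * (μ f * (a f * |d f|)) := by
    intro f
    have hsq : d f ^ 2 ≤ 2 * |d f| := by
      rw [← sq_abs]
      nlinarith [abs_nonneg (d f), hd f]
    split_ifs with hmargin
    · have : 0 ≤ 2 / t * (μ f * (a f * |d f|)) := by
        have := ha f; have := hμ f; positivity
      nlinarith [hμ f, hd f]
    · have hsmall : d f ^ 2 ≤ 2 / t * (a f * |d f|) := by
        rw [div_mul_eq_mul_div, le_div_iff₀ ht]
        nlinarith [abs_nonneg (d f), not_lt.mp hmargin]
      nlinarith [hμ f]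
  calc ∑ f, μ f * d f ^ 2
      ≤ ∑ f, (4 * (if a f < t then μ f else 0) + 2 / t * (μ f * (a f * |d f|))) :=
        Finset.sum_le_sum fun f _ => hpoint f
    _ = _ := by rw [Finset.sum_add_distrib, ← Finset.mul_sum, ← Finset.mul_sum, Finset.sum_filter]

lemma le_mul_rpow_of_forall_le_add_div_of_pos {X A B C E q : ℝ} (hq : 0 ≤ q) (hC : 0 < C)
    (hE : 0 < E) (h : ∀ t, 0 < t → X ≤ A * (C * t) ^ q + B * E / t) :
    X ≤ (A + B) * C ^ (q / (q + 1)) * E ^ (q / (q + 1)) := by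
  have hCE : 0 < C * E := mul_pos hC hE
  set u := (C * E) ^ (q + 1)⁻¹ with hu_def
  have hu : 0 < u := Real.rpow_pos_of_pos hCE _
  have hu_pow : u ^ q * u = C * E := by
    rw [← Real.rpow_add_one hu.ne', Real.rpow_inv_rpow hCE.le (by linarith)]
  have hCE_pow : C ^ (q / (q + 1)) * E ^ (q / (q + 1)) = u ^ q := by
    rw [← Real.mul_rpow hC.le hE.le, hu_def, ← Real.rpow_mul hCE.le, inv_mul_eq_div]
  have hE_div : E / (u / C) = u ^ q := by
    field_simp
    linarith
  have := h (u / C) (div_pos hu hC)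
  rw [mul_div_cancel₀ u hC.ne', mul_div_assoc, hE_div] at this
  rw [mul_assoc, hCE_pow]
  linarith

lemma le_mul_rpow_of_forall_le_add_div {X A B C E q : ℝ} (hq : 0 ≤ q) (hC : 0 < C)
    (hE : 0 ≤ E) (hB : 0 ≤ B) (h : ∀ t, 0 < t → X ≤ A * (C * t) ^ q + B * E / t) :
    X ≤ (A + B) * C ^ (q / (q + 1)) * E ^ (q / (q + 1)) := by
  -- The balancing threshold degenerates at `E = 0`, so that case is reached as a limit `E + ε → E`.
  have hθ : 0 ≤ q / (q + 1) := by positivity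
  have hcont : Tendsto (fun ε => (A + B) * C ^ (q / (q + 1)) * (E + ε) ^ (q / (q + 1)))
      (𝓝[>] 0) (𝓝 ((A + B) * C ^ (q / (q + 1)) * E ^ (q / (q + 1)))) := by
    have := ((Real.continuous_rpow_const hθ).comp (continuous_const_add E)).tendsto 0
    simpa using (this.const_mul ((A + B) * C ^ (q / (q + 1)))).mono_left nhdsWithin_le_nhds
  refine ge_of_tendsto hcont (eventually_nhdsWithin_of_forall fun ε (hε : 0 < ε) => ?_)
  refine le_mul_rpow_of_forall_le_add_div_of_pos hq hC (by linarith) fun t ht => ?_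
  calc X ≤ A * (C * t) ^ q + B * E / t := h t ht
    _ ≤ A * (C * t) ^ q + B * (E + ε) / t := by gcongr; linarith

open HingeLoss

theorem stmt17_general {F : Type*} [Fintype F]
    (μF : F → ℝ) (hμ0 : ∀ f, 0 ≤ μF f)
    (η : F → ℝ)
    (q C : ℝ) (hq : 0 ≤ q) (hC : 0 < C)
    (hnoise : ∀ t : ℝ, 0 < t →
      (∑ f ∈ Finset.univ.filter (fun f => |2 * η f - 1| < t), μF f) ≤ (C * t) ^ q)
    (R : (F → ℝ) → ℝ)
    (hR : ∀ h : F → ℝ, R h = ∑ f, μF f *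
      (η f * max (1 - max (-1) (min (h f) 1)) 0
        + (1 - η f) * max (1 + max (-1) (min (h f) 1)) 0))
    (hstar : F → ℝ) (hBayes : ∀ h : F → ℝ, R hstar ≤ R h) :
    ∀ h : F → ℝ,
      (∑ f, μF f * (max (-1) (min (h f) 1) - max (-1) (min (hstar f) 1)) ^ 2)
        ≤ 6 * C ^ (q / (q + 1)) * (R h - R hstar) ^ (q / (q + 1)) := by
  classical
  intro h
  have hrisk (g : F → ℝ) : R g = ∑ f, μF f * (1 + (1 - 2 * η f) * clip (g f)) := by
    rw [hR]
    exact sum_congr rfl fun f _ =>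
      congrArg (μF f * ·) (inner_risk_of_abs_le_one (η f) (abs_clip_le_one (g f)))
  have hopt (f : F) (hf : 0 < μF f) : (1 - 2 * η f) * clip (hstar f) = -|1 - 2 * η f| := by
    obtain ⟨x, hx⟩ := exists_mul_clip_eq_neg_abs (1 - 2 * η f)
    have := apply_le_of_forall_sum_mul_le μF (fun f x => 1 + (1 - 2 * η f) * clip x) hstar
      (fun g => by simpa only [hrisk] using hBayes g) hf x
    linarith [neg_abs_le_mul_of_abs_le_one (1 - 2 * η f) (abs_clip_le_one (hstar f))]
  have hexcess : R h - R hstar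
      = ∑ f, μF f * (|2 * η f - 1| * |clip (h f) - clip (hstar f)|) := by
    rw [hrisk, hrisk, ← sum_sub_distrib]
    refine sum_congr rfl fun f _ => ?_
    rcases (hμ0 f).eq_or_lt with hf | hf
    · simp [← hf]
    · rw [abs_sub_comm, ← mul_sub_eq_abs_mul_abs_sub (abs_clip_le_one _) (hopt f hf)]
      ring
  have hdev (f : F) : |clip (h f) - clip (hstar f)| ≤ 2 := by
    linarith [abs_sub (clip (h f)) (clip (hstar f)), abs_clip_le_one (h f),
      abs_clip_le_one (hstar f)]
  rw [show (6 : ℝ) = 4 + 2 by norm_num]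
  refine le_mul_rpow_of_forall_le_add_div hq hC (sub_nonneg.mpr (hBayes h)) (by norm_num)
    fun t ht => ?_
  calc ∑ f, μF f * (clip (h f) - clip (hstar f)) ^ 2
      ≤ 4 * ∑ f ∈ univ.filter (fun f => |2 * η f - 1| < t), μF f
        + 2 / t * (R h - R hstar) := by
        rw [hexcess]
        exact sum_mul_sq_le_of_margin_threshold μF _ _ hμ0 (fun _ => abs_nonneg _) hdev ht
    _ ≤ 4 * (C * t) ^ q + 2 * (R h - R hstar) / t := by
        rw [div_mul_eq_mul_div]
        linarith [hnoise t ht]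

/-- Noise exponent `q` with constant `C` implies the variance bound for the clipped hinge loss
with exponent `ϑ = q/(q+1)` and constant `V = 6 C^(q/(q+1))`. -/
theorem stmt17 {F : Type*} [Fintype F]
    (μF : F → ℝ) (hμ0 : ∀ f, 0 ≤ μF f) (hμ1 : ∑ f, μF f = 1)
    (η : F → ℝ) (hη : ∀ f, 0 ≤ η f ∧ η f ≤ 1)
    (q C : ℝ) (hq : 0 ≤ q) (hC : 0 < C)
    (hnoise : ∀ t : ℝ, 0 < t →
      (∑ f ∈ Finset.univ.filter (fun f => |2 * η f - 1| < t), μF f) ≤ (C * t) ^ q)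
    (R : (F → ℝ) → ℝ)
    (hR : ∀ h : F → ℝ, R h = ∑ f, μF f *
      (η f * max (1 - max (-1) (min (h f) 1)) 0
        + (1 - η f) * max (1 + max (-1) (min (h f) 1)) 0))
    (hstar : F → ℝ) (hBayes : ∀ h : F → ℝ, R hstar ≤ R h) :
    ∀ h : F → ℝ,
      (∑ f, μF f * (max (-1) (min (h f) 1) - max (-1) (min (hstar f) 1)) ^ 2)
        ≤ 6 * C ^ (q / (q + 1)) * (R h - R hstar) ^ (q / (q + 1)) :=
  stmt17_general μF hμ0 η q C hq hC hnoise R hR hstar hBayes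
end
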